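/- Let κ > 0 and A, B ∈ ℝ. Then lim_{ε → 0⁺} (κ/(2π)) ∫_ℝ ∫_ℝ exp(−ε(a² + b²)) · exp( i·(κ/2)·(a² − b²) − (i/√2)·A·(a + b) − (i/√2)·B·(a − b) ) da db = exp(−i·A·B/κ). -/

import Mathlib

/-!
For `ε > 0` the integrand factorises as `exp (β a² + c₁ a) · exp (conj β · b² + c₂ b)` with
`β = -ε + iκ/2`, `c₁ = -i(A+B)/√2`, `c₂ = -i(A-B)/√2`, so the double integral is a product of two
Gaussian integrals `(π / (-β))^{1/2} exp (-c²/(4β))`. This closed form is continuous in `β` up to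
the imaginary axis, so the limit `ε → 0⁺` is its value at `β = iκ/2`. There the two square roots
are conjugate and multiply to `π/‖β‖ = 2π/κ`, cancelling the prefactor, while the exponents add
up to `((A+B)² - (A-B)²)/(2iκ) = -iAB/κ`.
-/

open MeasureTheory Filter Complex ComplexConjugate

noncomputable def gaussianIntegralClosedForm (b c : ℂ) : ℂ :=
  (Real.pi / -b) ^ (1 / 2 : ℂ) * cexp (-(c ^ 2 / (4 * b)))

lemma integral_cexp_quadratic_eq_gaussianIntegralClosedForm {b : ℂ} (hb : b.re < 0) (c : ℂ) :
    ∫ x : ℝ, cexp (b * x ^ 2 + c * x) = gaussianIntegralClosedForm b c := by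
  simpa [gaussianIntegralClosedForm] using integral_cexp_quadratic hb c 0

lemma integral_integral_cexp_quadratic_mul {b₁ b₂ : ℂ} (hb₁ : b₁.re < 0) (hb₂ : b₂.re < 0)
    (c₁ c₂ : ℂ) :
    ∫ x : ℝ, ∫ y : ℝ, cexp (b₁ * x ^ 2 + c₁ * x) * cexp (b₂ * y ^ 2 + c₂ * y) =
      gaussianIntegralClosedForm b₁ c₁ * gaussianIntegralClosedForm b₂ c₂ := by
  simp_rw [integral_const_mul, integral_cexp_quadratic_eq_gaussianIntegralClosedForm hb₂,
    integral_mul_const, integral_cexp_quadratic_eq_gaussianIntegralClosedForm hb₁]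

lemma Complex.ofReal_div_mem_slitPlane {r : ℝ} (hr : 0 < r) {z : ℂ} (hz : z ∈ slitPlane) :
    (r : ℂ) / z ∈ slitPlane := by
  have hz0 : 0 < normSq z := normSq_pos.mpr (slitPlane_ne_zero hz)
  rw [mem_slitPlane_iff] at hz ⊢
  simp only [div_re, div_im, ofReal_re, ofReal_im, zero_mul, zero_div, add_zero, zero_sub]
  refine hz.imp (fun h => by positivity) (fun h => ?_)
  simp [hr.ne', hz0.ne', h]

lemma continuousAt_gaussianIntegralClosedForm {b : ℂ} (hb : -b ∈ slitPlane) (c : ℂ) :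
    ContinuousAt (gaussianIntegralClosedForm · c) b := by
  have hb0 : b ≠ 0 := neg_ne_zero.mp (slitPlane_ne_zero hb)
  exact ((continuousAt_const.div continuousAt_id.neg (neg_ne_zero.mpr hb0)).cpow
    continuousAt_const (ofReal_div_mem_slitPlane Real.pi_pos hb)).mul
    (continuousAt_const.div (continuousAt_const.mul continuousAt_id) (by simpa using hb0)).neg.cexp

lemma cpow_half_mul_conj_cpow_half {z : ℂ} (hz : z ∈ slitPlane) :
    z ^ (1 / 2 : ℂ) * conj z ^ (1 / 2 : ℂ) = ‖z‖ := by
  have hconj : conj z ^ (1 / 2 : ℂ) = conj (z ^ (1 / 2 : ℂ)) := by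
    simpa [map_ofNat] using (congrArg conj (cpow_conj z (1 / 2) (slitPlane_arg_ne_pi hz))).symm
  have hnorm : ‖z ^ (1 / 2 : ℂ)‖ ^ 2 = ‖z‖ := by
    rw [show (1 / 2 : ℂ) = ((1 / 2 : ℝ) : ℂ) by push_cast; rfl, norm_cpow_real,
      ← Real.sqrt_eq_rpow, Real.sq_sqrt (norm_nonneg z)]
  rw [hconj, mul_conj, normSq_eq_norm_sq, hnorm]

lemma gaussianIntegralClosedForm_mul_conj {b : ℂ} (hb : -b ∈ slitPlane) (c₁ c₂ : ℂ) :
    gaussianIntegralClosedForm b c₁ * gaussianIntegralClosedForm (conj b) c₂ =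
      (Real.pi / ‖b‖ : ℝ) * cexp (-(c₁ ^ 2 / (4 * b)) - c₂ ^ 2 / (4 * conj b)) := by
  have hconj : (Real.pi : ℂ) / -conj b = conj (Real.pi / -b) := by simp [map_div₀]
  have hnorm : ‖(Real.pi : ℂ) / -b‖ = Real.pi / ‖b‖ := by
    simp [abs_of_pos Real.pi_pos]
  unfold gaussianIntegralClosedForm
  rw [hconj, mul_mul_mul_comm,
    cpow_half_mul_conj_cpow_half (ofReal_div_mem_slitPlane Real.pi_pos hb), hnorm,
    ← Complex.exp_add, sub_eq_add_neg]

lemma fresnel_integrand_eq_mul (ε κ A B a b : ℝ) :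
    cexp (-((ε : ℂ) * ((a : ℂ) ^ 2 + (b : ℂ) ^ 2))) *
        cexp (I * ((κ : ℂ) / 2) * ((a : ℂ) ^ 2 - (b : ℂ) ^ 2) -
          I / (Real.sqrt 2 : ℂ) * (A : ℂ) * ((a : ℂ) + (b : ℂ)) -
          I / (Real.sqrt 2 : ℂ) * (B : ℂ) * ((a : ℂ) - (b : ℂ))) =
      cexp ((-ε + I * (κ / 2)) * a ^ 2 + -(I / Real.sqrt 2) * (A + B) * a) *
        cexp (conj (-ε + I * (κ / 2)) * b ^ 2 + -(I / Real.sqrt 2) * (A - B) * b) := by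
  rw [← Complex.exp_add, ← Complex.exp_add]
  congr 1
  simp only [map_add, map_neg, map_mul, conj_ofReal, conj_I, map_div₀, map_ofNat]
  ring

lemma ofReal_mul_gaussianIntegralClosedForm_mul_conj_I_mul {κ : ℝ} (hκ : 0 < κ) (A B : ℝ) :
    ((κ / (2 * Real.pi) : ℝ) : ℂ) *
        (gaussianIntegralClosedForm (I * (κ / 2)) (-(I / Real.sqrt 2) * (A + B)) *
          gaussianIntegralClosedForm (conj (I * (κ / 2))) (-(I / Real.sqrt 2) * (A - B))) =
      cexp (-I * A * B / κ) := by
  have hslit : -(I * (κ / 2)) ∈ slitPlane := by simp [mem_slitPlane_iff, hκ.ne']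
  have hnorm : ‖I * (κ / 2 : ℂ)‖ = κ / 2 := by simp [abs_of_pos hκ]
  have hsq (x : ℂ) : (-(I / Real.sqrt 2) * x) ^ 2 = -x ^ 2 / 2 := by
    rw [mul_pow, neg_sq, div_pow, I_sq, ← ofReal_pow, Real.sq_sqrt zero_le_two, ofReal_ofNat]
    ring
  have hexponent : -((-(I / Real.sqrt 2) * (A + B)) ^ 2 / (4 * (I * (κ / 2)))) -
      (-(I / Real.sqrt 2) * (A - B)) ^ 2 / (4 * conj (I * (κ / 2))) = -I * A * B / κ := by
    simp only [hsq, map_mul, conj_I, map_div₀, conj_ofReal, map_ofNat]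
    field_simp
    rw [I_sq]
    ring
  rw [gaussianIntegralClosedForm_mul_conj hslit, hnorm, hexponent, ← mul_assoc, ← ofReal_mul,
    show κ / (2 * Real.pi) * (Real.pi / (κ / 2)) = 1 by field_simp, ofReal_one, one_mul]

/-- Let `κ > 0` and `A, B ∈ ℝ`.  Then the Gaussian-regularized
Fresnel-type double integral
`(κ/(2π)) ∬ exp(-ε(a²+b²)) exp(i(κ/2)(a²-b²) - (i/√2)A(a+b) - (i/√2)B(a-b)) da db`
tends to `exp(-i A B/κ)` as `ε → 0⁺`. -/
theorem stmt10 (κ A B : ℝ) (hκ : 0 < κ) :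
    Tendsto
      (fun ε : ℝ =>
        ((κ / (2 * Real.pi) : ℝ) : ℂ) *
          ∫ a : ℝ, ∫ b : ℝ,
            Complex.exp (-((ε : ℂ) * ((a : ℂ) ^ 2 + (b : ℂ) ^ 2))) *
              Complex.exp
                (Complex.I * ((κ : ℂ) / 2) * ((a : ℂ) ^ 2 - (b : ℂ) ^ 2) -
                  Complex.I / (Real.sqrt 2 : ℂ) * (A : ℂ) * ((a : ℂ) + (b : ℂ)) -
                  Complex.I / (Real.sqrt 2 : ℂ) * (B : ℂ) * ((a : ℂ) - (b : ℂ))))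
      (nhdsWithin 0 (Set.Ioi 0))
      (nhds (Complex.exp (-Complex.I * (A : ℂ) * (B : ℂ) / (κ : ℂ)))) := by
  set β : ℝ → ℂ := fun ε => -ε + I * (κ / 2)
  set F : ℝ → ℂ := fun ε =>
    ((κ / (2 * Real.pi) : ℝ) : ℂ) *
      (gaussianIntegralClosedForm (β ε) (-(I / Real.sqrt 2) * (A + B)) *
        gaussianIntegralClosedForm (conj (β ε)) (-(I / Real.sqrt 2) * (A - B)))
  have hslit : -β 0 ∈ slitPlane := by simp [β, mem_slitPlane_iff, hκ.ne']
  have hcont : ContinuousAt F 0 := by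
    have hβ : Continuous β := by fun_prop
    exact continuousAt_const.mul
      (((continuousAt_gaussianIntegralClosedForm hslit _).comp hβ.continuousAt).mul
        ((continuousAt_gaussianIntegralClosedForm (by simpa [mem_slitPlane_iff] using hslit)
          _).comp (continuous_conj.comp hβ).continuousAt))
  have hF0 : F 0 = cexp (-I * A * B / κ) := by
    simpa [F, β] using ofReal_mul_gaussianIntegralClosedForm_mul_conj_I_mul hκ A B
  refine (hF0 ▸ hcont.tendsto.mono_left nhdsWithin_le_nhds).congr' ?_
  filter_upwards [self_mem_nhdsWithin] with ε (hε : 0 < ε)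
  have hβ_re : (β ε).re < 0 := by simpa [β] using hε
  simp_rw [F, fresnel_integrand_eq_mul]
  rw [integral_integral_cexp_quadratic_mul hβ_re (by rwa [conj_re])]
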